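/- arXiv:math/0611382 — 3 statements merged into one kernel-verified Lean document; each statement's English description precedes it below -/
import Mathlib

section
/- Emptiness criterion for a trinomial in a quadrant (from Proposition 1.2.BG and its proof): Let a(x,y) = a₁x^{i₁}y^{j₁} + a₂x^{i₂}y^{j₂} + a₃x^{i₃}y^{j₃} be a real trinomial with a₁,a₂,a₃ ≠ 0 whose exponent vectors (i₁,j₁),(i₂,j₂),(i₃,j₃) ∈ ℤ² are affinely independent. Fix ε,δ ∈ {+1,−1} and let Q_{ε,δ} = {(x,y) ∈ ℝ² : εx > 0, δy > 0} be the corresponding open quadrant. Then a has no zeros in Q_{ε,δ} if and only if the three signs σ_k = sign(a_k·ε^{i_k}·δ^{j_k}), k = 1,2,3, are all equal. -/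
/-!
Put `x = ε X`, `y = δ Y` with `X, Y > 0`; the `k`-th monomial becomes `σ_k X^{i_k} Y^{j_k}` with
`σ_k = a_k ε^{i_k} δ^{j_k}`. Dividing by `X^{i₁} Y^{j₁}` turns the trinomial into
`σ₁ + σ₂ u + σ₃ v` with `u, v` the monomials of exponents `(i₂ - i₁, j₂ - j₁)` and
`(i₃ - i₁, j₃ - j₁)`. When these exponent vectors are linearly independent, the monomial map
is onto the open positive quadrant (solve the linear system for `log X`, `log Y`), so the
trinomial vanishes in the quadrant iff the affine function `σ₁ + σ₂ u + σ₃ v` vanishes for some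
`u, v > 0`, i.e. iff the `σ_k` do not all have the same sign.
-/

theorem Real.exp_zpow (x : ℝ) (n : ℤ) : Real.exp x ^ n = Real.exp (n * x) := by
  rw [← Real.rpow_intCast, ← Real.exp_mul, mul_comm]

theorem Real.sign_eq_sign_iff_mul_pos {a b : ℝ} (ha : a ≠ 0) (hb : b ≠ 0) :
    Real.sign a = Real.sign b ↔ 0 < a * b := by
  rcases ha.lt_or_gt with ha | ha <;> rcases hb.lt_or_gt with hb | hb <;>
    simp [Real.sign_of_neg, Real.sign_of_pos, mul_pos_iff, ha, hb, ha.not_gt, hb.not_gt] <;>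
    norm_num

theorem exists_pos_add_mul_add_mul_eq_zero_of_mul_neg {A B C : ℝ} (hAB : A * B < 0)
    (hC : C ≠ 0) : ∃ u v : ℝ, 0 < u ∧ 0 < v ∧ A + B * u + C * v = 0 := by
  have hB : B ≠ 0 := by rintro rfl; simp at hAB
  -- `(u, v)` is `(-A/(2B), -A/(2C))` resp. `(-2A/B, A/C)`, with squared denominators
  rcases (mul_ne_zero (left_ne_zero_of_mul hAB.ne) hC).lt_or_gt with hAC | hAC
  · refine ⟨-(A * B) / (2 * B ^ 2), -(A * C) / (2 * C ^ 2), div_pos (by linarith) (by positivity),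
      div_pos (by linarith) (by positivity), ?_⟩
    field_simp
    ring
  · refine ⟨-2 * (A * B) / B ^ 2, A * C / C ^ 2, div_pos (by linarith) (by positivity),
      div_pos hAC (by positivity), ?_⟩
    field_simp
    ring

theorem exists_pos_add_mul_add_mul_eq_zero_iff {A B C : ℝ} (hA : A ≠ 0) (hB : B ≠ 0)
    (hC : C ≠ 0) :
    (∃ u v : ℝ, 0 < u ∧ 0 < v ∧ A + B * u + C * v = 0) ↔
      ¬(Real.sign A = Real.sign B ∧ Real.sign B = Real.sign C) := by
  rw [Real.sign_eq_sign_iff_mul_pos hA hB, Real.sign_eq_sign_iff_mul_pos hB hC]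
  constructor
  · rintro ⟨u, v, hu, hv, h⟩ ⟨hAB, hBC⟩
    have hAC : 0 < A * C := by nlinarith [mul_pos hAB hBC, mul_self_pos.2 hB]
    have : A * A + A * B * u + A * C * v = 0 := by linear_combination A * h
    linarith [mul_pos hAB hu, mul_pos hAC hv, mul_self_pos.2 hA]
  · intro h
    rcases (mul_ne_zero hA hB).lt_or_gt with hAB | hAB
    · exact exists_pos_add_mul_add_mul_eq_zero_of_mul_neg hAB hC
    · have hBC : B * C < 0 := (not_lt.mp fun hBC ↦ h ⟨hAB, hBC⟩).lt_of_ne (mul_ne_zero hB hC)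
      have hAC : A * C < 0 := by nlinarith [mul_self_pos.2 hB]
      obtain ⟨v, u, hv, hu, h⟩ := exists_pos_add_mul_add_mul_eq_zero_of_mul_neg hAC hB
      exact ⟨u, v, hu, hv, by linarith⟩

theorem exists_zpow_mul_zpow_eq {p q r s : ℤ} (hdet : p * s - r * q ≠ 0) {u v : ℝ}
    (hu : 0 < u) (hv : 0 < v) :
    ∃ X Y : ℝ, 0 < X ∧ 0 < Y ∧ X ^ p * Y ^ q = u ∧ X ^ r * Y ^ s = v := by
  have hD : (p * s - r * q : ℝ) ≠ 0 := by exact_mod_cast hdet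
  set x := (s * Real.log u - q * Real.log v) / (p * s - r * q) with hx_def
  set y := (p * Real.log v - r * Real.log u) / (p * s - r * q) with hy_def
  have hx : p * x + q * y = Real.log u := by
    rw [hx_def, hy_def, ← mul_div_assoc, ← mul_div_assoc, ← add_div, div_eq_iff hD]; ring
  have hy : r * x + s * y = Real.log v := by
    rw [hx_def, hy_def, ← mul_div_assoc, ← mul_div_assoc, ← add_div, div_eq_iff hD]; ring
  refine ⟨Real.exp x, Real.exp y, Real.exp_pos x, Real.exp_pos y, ?_, ?_⟩
  · rw [Real.exp_zpow, Real.exp_zpow, ← Real.exp_add, hx, Real.exp_log hu]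
  · rw [Real.exp_zpow, Real.exp_zpow, ← Real.exp_add, hy, Real.exp_log hv]

theorem exists_pos_trinomial_eq_zero_iff {A B C : ℝ} {i₁ j₁ i₂ j₂ i₃ j₃ : ℤ}
    (hdet : (i₂ - i₁) * (j₃ - j₁) - (i₃ - i₁) * (j₂ - j₁) ≠ 0) :
    (∃ X Y : ℝ, 0 < X ∧ 0 < Y ∧
        A * X ^ i₁ * Y ^ j₁ + B * X ^ i₂ * Y ^ j₂ + C * X ^ i₃ * Y ^ j₃ = 0) ↔
      ∃ u v : ℝ, 0 < u ∧ 0 < v ∧ A + B * u + C * v = 0 := by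
  have factor : ∀ X Y : ℝ, 0 < X → 0 < Y →
      A * X ^ i₁ * Y ^ j₁ + B * X ^ i₂ * Y ^ j₂ + C * X ^ i₃ * Y ^ j₃ =
        X ^ i₁ * Y ^ j₁ * (A + B * (X ^ (i₂ - i₁) * Y ^ (j₂ - j₁)) +
          C * (X ^ (i₃ - i₁) * Y ^ (j₃ - j₁))) := fun X Y hX hY ↦ by
    simp only [zpow_sub₀ hX.ne', zpow_sub₀ hY.ne']
    field_simp
  constructor
  · rintro ⟨X, Y, hX, hY, h⟩
    refine ⟨X ^ (i₂ - i₁) * Y ^ (j₂ - j₁), X ^ (i₃ - i₁) * Y ^ (j₃ - j₁), by positivity,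
      by positivity, ?_⟩
    rw [factor X Y hX hY] at h
    exact (mul_eq_zero.mp h).resolve_left (by positivity)
  · rintro ⟨u, v, hu, hv, h⟩
    obtain ⟨X, Y, hX, hY, rfl, rfl⟩ := exists_zpow_mul_zpow_eq hdet hu hv
    exact ⟨X, Y, hX, hY, by rw [factor X Y hX hY, h, mul_zero]⟩

theorem exists_pos_mul_and_iff {ε : ℝ} (hε : ε ≠ 0) (P : ℝ → Prop) :
    (∃ x, 0 < ε * x ∧ P x) ↔ ∃ X, 0 < X ∧ P (ε * X) := by
  constructor
  · rintro ⟨x, hx, h⟩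
    exact ⟨ε * x / ε ^ 2, div_pos hx (by positivity),
      by rwa [show ε * (ε * x / ε ^ 2) = x by field_simp]⟩
  · rintro ⟨X, hX, h⟩
    exact ⟨ε * X, by rw [← mul_assoc]; exact mul_pos (mul_self_pos.2 hε) hX, h⟩

theorem exists_mem_quadrant_iff {ε δ : ℝ} (hε : ε ≠ 0) (hδ : δ ≠ 0) (P : ℝ → ℝ → Prop) :
    (∃ x y, 0 < ε * x ∧ 0 < δ * y ∧ P x y) ↔ ∃ X Y, 0 < X ∧ 0 < Y ∧ P (ε * X) (δ * Y) := by
  simp only [exists_and_left, exists_pos_mul_and_iff hε, exists_pos_mul_and_iff hδ]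

/-- Emptiness criterion for a trinomial in a quadrant (Proposition 1.2.BG):
a real trinomial with affinely independent exponent vectors has no zeros in the
open quadrant `Q_{ε,δ}` if and only if the three signs
`σ_k = sign(a_k·ε^{i_k}·δ^{j_k})` coincide. -/
theorem trinomial_no_zero_in_quadrant_iff
    (a₁ a₂ a₃ : ℝ) (i₁ j₁ i₂ j₂ i₃ j₃ : ℤ) (ε δ : ℝ)
    (ha₁ : a₁ ≠ 0) (ha₂ : a₂ ≠ 0) (ha₃ : a₃ ≠ 0)
    (hε : ε = 1 ∨ ε = -1) (hδ : δ = 1 ∨ δ = -1)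
    (hindep : (i₂ - i₁) * (j₃ - j₁) - (i₃ - i₁) * (j₂ - j₁) ≠ 0) :
    (∀ x y : ℝ, 0 < ε * x → 0 < δ * y →
        a₁ * x ^ i₁ * y ^ j₁ + a₂ * x ^ i₂ * y ^ j₂ + a₃ * x ^ i₃ * y ^ j₃ ≠ 0) ↔
      (Real.sign (a₁ * ε ^ i₁ * δ ^ j₁) = Real.sign (a₂ * ε ^ i₂ * δ ^ j₂) ∧
       Real.sign (a₂ * ε ^ i₂ * δ ^ j₂) = Real.sign (a₃ * ε ^ i₃ * δ ^ j₃)) := by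
  have hε₀ : ε ≠ 0 := by rcases hε with rfl | rfl <;> norm_num
  have hδ₀ : δ ≠ 0 := by rcases hδ with rfl | rfl <;> norm_num
  have rescale : ∀ (a X Y : ℝ) (i j : ℤ),
      a * (ε * X) ^ i * (δ * Y) ^ j = a * ε ^ i * δ ^ j * X ^ i * Y ^ j := fun _ _ _ _ _ ↦ by
    rw [mul_zpow, mul_zpow]; ring
  rw [← not_iff_not]
  simp only [not_forall, not_not, exists_prop]
  rw [exists_mem_quadrant_iff hε₀ hδ₀]
  simp only [rescale]
  rw [exists_pos_trinomial_eq_zero_iff hindep,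
    exists_pos_add_mul_add_mul_eq_zero_iff (by positivity) (by positivity) (by positivity)]
end

section
/- Emptiness of the hypersurface far in a direction dual to a vertex (supporting Theorems 1.1.A and 6.3.A): Let K be ℝ or ℂ, let a be a Laurent polynomial over K in n variables, let v ∈ supp a, and let u ∈ ℝⁿ satisfy ⟨u,ω⟩ < ⟨u,v⟩ for every ω ∈ supp a ∖ {v} (so v is the vertex of the Newton polyhedron Δ(a) at which the linear functional ⟨u,·⟩ attains its strict maximum). Then for every compact set C ⊂ (K∖{0})ⁿ there exists T > 1 such that for all t ≥ T and all x ∈ C, a(qh_{u,t}(x)) ≠ 0. -/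
open scoped BigOperators

/-- The value of a Laurent polynomial at a point of `(K∖0)ⁿ`, for `K = ℝ` or `ℂ`. -/
noncomputable def laurentEval {n : ℕ} {K : Type*} [RCLike K]
    (a : (Fin n → ℤ) →₀ K) (x : Fin n → K) : K :=
  ∑ ω ∈ a.support, a ω * ∏ i, x i ^ ω i

/-- The quasi-homothety `qh_{w,t}` on `(K∖0)ⁿ`. -/
noncomputable def quasiHomothety {n : ℕ} {K : Type*} [RCLike K]
    (w : Fin n → ℝ) (t : ℝ) (x : Fin n → K) : Fin n → K :=
  fun i => ((t ^ w i : ℝ) : K) * x i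

/-- Emptiness of the hypersurface far in a direction dual to a vertex: if `v` is the
vertex of the Newton polyhedron where `⟨u,·⟩` attains its strict maximum over `supp a`,
then for every compact `C ⊂ (K∖0)ⁿ` the polynomial has no zeros on `qh_{u,t}(C)` for
all large `t`. -/
theorem laurent_no_zero_far_in_vertex_direction {n : ℕ} {K : Type*} [RCLike K]
    (a : (Fin n → ℤ) →₀ K) (v : Fin n → ℤ) (u : Fin n → ℝ)
    (hv : v ∈ a.support)
    (hmax : ∀ ω ∈ a.support, ω ≠ v →
      (∑ i, u i * (ω i : ℝ)) < ∑ i, u i * (v i : ℝ)) :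
    ∀ C : Set (Fin n → K), IsCompact C → (∀ x ∈ C, ∀ i, x i ≠ 0) →
      ∃ T : ℝ, 1 < T ∧ ∀ t : ℝ, T ≤ t → ∀ x ∈ C,
        laurentEval a (quasiHomothety u t x) ≠ 0 := by
    classical
  intro C hC hC0
  rcases C.eq_empty_or_nonempty with rfl | hne
  · exact ⟨2, one_lt_two, by simp⟩
  set L : (Fin n → ℤ) → ℝ := fun ω => ∑ i, u i * (ω i : ℝ) with hLdef
  -- key factorization
  have key : ∀ t : ℝ, 0 < t → ∀ x : Fin n → K, ∀ ω : Fin n → ℤ,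
      (∏ i, (quasiHomothety u t x) i ^ ω i)
        = ((t ^ L ω : ℝ) : K) * ∏ i, x i ^ ω i := by
    intro t ht x ω
    have h1 : ∀ i : Fin n, (quasiHomothety u t x) i ^ ω i
        = ((t ^ (u i * (ω i : ℝ)) : ℝ) : K) * x i ^ ω i := by
      intro i
      rw [quasiHomothety, mul_zpow, Real.rpow_mul_intCast ht.le, RCLike.ofReal_zpow]
    calc (∏ i, (quasiHomothety u t x) i ^ ω i)
        = ∏ i, ((t ^ (u i * (ω i : ℝ)) : ℝ) : K) * x i ^ ω i := by
          exact Finset.prod_congr rfl fun i _ => h1 i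
      _ = (∏ i, ((t ^ (u i * (ω i : ℝ)) : ℝ) : K)) * ∏ i, x i ^ ω i :=
          Finset.prod_mul_distrib
      _ = ((t ^ L ω : ℝ) : K) * ∏ i, x i ^ ω i := by
          rw [hLdef, Real.rpow_sum_of_pos ht]
          push_cast
          ring
  -- continuity of monomial norms on C
  have hcont : ∀ ω : Fin n → ℤ,
      ContinuousOn (fun x : Fin n → K => ‖∏ i, x i ^ ω i‖) C := by
    intro ω
    refine ContinuousOn.norm ?_
    intro x hx
    refine ContinuousAt.continuousWithinAt ?_
    refine tendsto_finset_prod _ fun i _ => ?_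
    have h1 : ContinuousAt (fun z : K => z ^ ω i) (x i) :=
      continuousAt_zpow₀ _ _ (Or.inl (hC0 x hx i))
    have h2 : ContinuousAt (fun y : Fin n → K => y i) x := (continuous_apply i).continuousAt
    exact ContinuousAt.comp (x := x) h1 h2
  -- minimum of ‖x^v‖ on C
  obtain ⟨x₀, hx₀C, hx₀min⟩ := hC.exists_isMinOn hne (hcont v)
  set c : ℝ := ‖∏ i, x₀ i ^ v i‖ with hcdef
  have hc : 0 < c := by
    rw [hcdef, norm_pos_iff]
    exact Finset.prod_ne_zero_iff.mpr fun i _ => zpow_ne_zero _ (hC0 x₀ hx₀C i)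
  have hcle : ∀ x ∈ C, c ≤ ‖∏ i, x i ^ v i‖ := fun x hx => hx₀min hx
  -- maxima of ‖x^ω‖ on C
  have hMex : ∀ ω : Fin n → ℤ, ∃ M : ℝ, ∀ x ∈ C, ‖∏ i, x i ^ ω i‖ ≤ M := by
    intro ω
    obtain ⟨y, hyC, hymax⟩ := hC.exists_isMaxOn hne (hcont ω)
    exact ⟨_, fun x hx => hymax hx⟩
  choose M hM using hMex
  set S := a.support.erase v with hSdef
  set B : (Fin n → ℤ) → ℝ := fun ω => ‖a ω‖ * M ω with hBdef
  have hB0 : ∀ ω ∈ S, 0 ≤ B ω := by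
    intro ω _
    exact mul_nonneg (norm_nonneg _) (le_trans (norm_nonneg _) (hM ω x₀ hx₀C))
  have hav : 0 < ‖a v‖ := norm_pos_iff.mpr (Finsupp.mem_support_iff.mp hv)
  -- choice of T via a limit
  have hlim : Filter.Tendsto (fun T : ℝ => ∑ ω ∈ S, B ω * T ^ (L ω - L v))
      Filter.atTop (nhds 0) := by
    have : Filter.Tendsto (fun T : ℝ => ∑ ω ∈ S, B ω * T ^ (L ω - L v))
        Filter.atTop (nhds (∑ ω ∈ S, B ω * 0)) := by
      refine tendsto_finset_sum _ fun ω hω => ?_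
      refine Filter.Tendsto.const_mul _ ?_
      have hωv : ω ∈ a.support ∧ ω ≠ v := Finset.mem_erase.mp hω |>.symm
      have hlt : L ω < L v := hmax ω hωv.1 hωv.2
      have := tendsto_rpow_neg_atTop (y := L v - L ω) (by linarith)
      simpa [neg_sub] using this
    simpa using this
  have hev : ∀ᶠ T : ℝ in Filter.atTop,
      (∑ ω ∈ S, B ω * T ^ (L ω - L v)) < ‖a v‖ * c := by
    exact hlim.eventually (gt_mem_nhds (by positivity))
  obtain ⟨T, hT1, hTbound⟩ :
      ∃ T : ℝ, 1 < T ∧ (∑ ω ∈ S, B ω * T ^ (L ω - L v)) < ‖a v‖ * c := by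
    have := (Filter.eventually_gt_atTop (1 : ℝ)).and hev
    obtain ⟨T, h1, h2⟩ := this.exists
    exact ⟨T, h1, h2⟩
  refine ⟨T, hT1, ?_⟩
  intro t ht x hxC hzero
  have ht0 : (0 : ℝ) < t := lt_of_lt_of_le (lt_trans one_pos hT1) ht
  have hT0 : (0 : ℝ) < T := lt_trans one_pos hT1
  -- rewrite the evaluation
  have heval : laurentEval a (quasiHomothety u t x)
      = ∑ ω ∈ a.support, a ω * (((t ^ L ω : ℝ) : K) * ∏ i, x i ^ ω i) := by
    unfold laurentEval
    exact Finset.sum_congr rfl fun ω _ => by rw [key t ht0 x ω]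
  set f : (Fin n → ℤ) → K := fun ω => a ω * (((t ^ L ω : ℝ) : K) * ∏ i, x i ^ ω i)
    with hfdef
  have hsplit : f v + ∑ ω ∈ S, f ω = 0 := by
    rw [hSdef, Finset.add_sum_erase _ f hv, ← heval, hzero]
  have hfv : ‖f v‖ = ‖a v‖ * (t ^ L v * ‖∏ i, x i ^ v i‖) := by
    rw [hfdef]
    simp only [norm_mul, RCLike.norm_ofReal, abs_of_pos (Real.rpow_pos_of_pos ht0 _)]
  have hbound : ∀ ω ∈ S, ‖f ω‖ ≤ t ^ L v * (B ω * T ^ (L ω - L v)) := by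
    intro ω hω
    have hωv : ω ∈ a.support ∧ ω ≠ v := Finset.mem_erase.mp hω |>.symm
    have hLlt : L ω < L v := hmax ω hωv.1 hωv.2
    have hsplitpow : t ^ L ω = t ^ L v * t ^ (L ω - L v) := by
      rw [← Real.rpow_add ht0]; ring_nf
    have hmono : t ^ (L ω - L v) ≤ T ^ (L ω - L v) :=
      Real.rpow_le_rpow_of_nonpos hT0 ht (by linarith)
    have h1 : ‖f ω‖ = ‖a ω‖ * (t ^ L ω * ‖∏ i, x i ^ ω i‖) := by
      rw [hfdef]
      simp only [norm_mul, RCLike.norm_ofReal, abs_of_pos (Real.rpow_pos_of_pos ht0 _)]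
    have hMx := hM ω x hxC
    have hM0 : (0:ℝ) ≤ M ω := le_trans (norm_nonneg _) (hM ω x₀ hx₀C)
    calc ‖f ω‖ = ‖a ω‖ * (t ^ L v * t ^ (L ω - L v) * ‖∏ i, x i ^ ω i‖) := by
          rw [h1, hsplitpow]
      _ ≤ ‖a ω‖ * (t ^ L v * T ^ (L ω - L v) * M ω) := by
          gcongr
      _ = t ^ L v * (B ω * T ^ (L ω - L v)) := by rw [hBdef]; ring
  -- the contradiction
  have hnorm : ‖f v‖ ≤ ∑ ω ∈ S, ‖f ω‖ := by
    have : f v = -∑ ω ∈ S, f ω := by linear_combination hsplit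
    rw [this, norm_neg]
    exact norm_sum_le _ _
  have hsum1 : (∑ ω ∈ S, ‖f ω‖) ≤ t ^ L v * ∑ ω ∈ S, B ω * T ^ (L ω - L v) := by
    rw [Finset.mul_sum]
    exact Finset.sum_le_sum hbound
  have hsum2 : t ^ L v * (∑ ω ∈ S, B ω * T ^ (L ω - L v)) < t ^ L v * (‖a v‖ * c) :=
    (mul_lt_mul_iff_right₀ (Real.rpow_pos_of_pos ht0 _)).mpr hTbound
  have hfinal : t ^ L v * (‖a v‖ * c) ≤ ‖f v‖ := by
    rw [hfv]
    have h := mul_le_mul_of_nonneg_left (hcle x hxC)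
      (by positivity : (0:ℝ) ≤ ‖a v‖ * t ^ L v)
    calc t ^ L v * (‖a v‖ * c) = ‖a v‖ * t ^ L v * c := by ring
      _ ≤ ‖a v‖ * t ^ L v * ‖∏ i, x i ^ v i‖ := h
      _ = ‖a v‖ * (t ^ L v * ‖∏ i, x i ^ v i‖) := by ring
  linarith
end

section
/- The moment map on the open torus stratum (supporting the claim of Section 3.1 that the Atiyah moment map restricts to a homeomorphism of ℝ₊Δ onto Δ): Let ω₁,…,ω_k ∈ ℝⁿ be points whose affine span is all of ℝⁿ. Define μ : ℝⁿ → ℝⁿ by μ(u) = (Σ_{i=1}^k e^{⟨u,ωᵢ⟩}·ωᵢ)/(Σ_{i=1}^k e^{⟨u,ωᵢ⟩}). Then μ is continuous and injective, and its range is exactly the interior of the convex hull conv{ω₁,…,ω_k}. -/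
open scoped BigOperators

/-- The moment map associated with the points `ω₁,…,ω_k`:
`μ(u) = (Σᵢ e^{⟨u,ωᵢ⟩}·ωᵢ) / (Σᵢ e^{⟨u,ωᵢ⟩})`. -/
noncomputable def momentMap {n k : ℕ} (ω : Fin k → (Fin n → ℝ)) (u : Fin n → ℝ) :
    Fin n → ℝ :=
  (∑ i, Real.exp (∑ j, u j * ω i j))⁻¹ • ∑ i, Real.exp (∑ j, u j * ω i j) • ω i

lemma gibbs_aux {k : ℕ} (a b : Fin k → ℝ)
    (hne : ∃ i j : Fin k, b i - a i ≠ b j - a j) :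
    ∑ i, (Real.exp (a i) / ∑ i', Real.exp (a i')) * (b i - a i)
      < Real.log (∑ i, Real.exp (b i)) - Real.log (∑ i, Real.exp (a i)) := by
  obtain ⟨i₀, j₀, hij⟩ := hne
  haveI : Nonempty (Fin k) := ⟨i₀⟩
  set Sa := ∑ i, Real.exp (a i) with hSa_def
  set Sb := ∑ i, Real.exp (b i) with hSb_def
  have hSa : 0 < Sa := Finset.sum_pos (fun i _ => Real.exp_pos _) Finset.univ_nonempty
  have hSb : 0 < Sb := Finset.sum_pos (fun i _ => Real.exp_pos _) Finset.univ_nonempty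
  have h₁ : ∑ i, Real.exp (a i) / Sa = 1 := by
    rw [← Finset.sum_div, div_self hSa.ne']
  have jensen := strictConcaveOn_log_Ioi.lt_map_sum (t := Finset.univ)
    (w := fun i => Real.exp (a i) / Sa) (p := fun i => Real.exp (b i - a i))
    (fun i _ => div_pos (Real.exp_pos _) hSa) h₁
    (fun i _ => Set.mem_Ioi.2 (Real.exp_pos _))
    ⟨i₀, Finset.mem_univ _, j₀, Finset.mem_univ _, fun h => hij (Real.exp_injective h)⟩
  simp only [smul_eq_mul, Real.log_exp] at jensen
  have hsum : ∑ i, Real.exp (a i) / Sa * Real.exp (b i - a i) = Sb / Sa := by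
    rw [hSb_def, Finset.sum_div]
    refine Finset.sum_congr rfl fun i _ => ?_
    rw [div_mul_eq_mul_div, ← Real.exp_add]
    ring_nf
  rw [hsum, Real.log_div hSb.ne' hSa.ne'] at jensen
  exact jensen

lemma dot_momentMap {n k : ℕ} (ω : Fin k → (Fin n → ℝ)) (u w : Fin n → ℝ) :
    ∑ m, w m * momentMap ω u m
      = ∑ i, (Real.exp (∑ j, u j * ω i j) / ∑ i', Real.exp (∑ j, u j * ω i' j))
          * (∑ m, w m * ω i m) := by
  have h : ∀ m, momentMap ω u m
      = (∑ i', Real.exp (∑ j, u j * ω i' j))⁻¹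
        * ∑ i, Real.exp (∑ j, u j * ω i j) * ω i m := by
    intro m
    simp [momentMap, Finset.sum_apply]
  simp_rw [h, div_eq_mul_inv, Finset.mul_sum]
  rw [Finset.sum_comm]
  refine Finset.sum_congr rfl fun i _ => Finset.sum_congr rfl fun m _ => by ring

lemma momentMap_inj {n k : ℕ} (ω : Fin k → (Fin n → ℝ))
    (hspan : affineSpan ℝ (Set.range ω) = ⊤) :
    Function.Injective (momentMap ω) := by
  intro u v huv
  by_contra hne
  set a : Fin k → ℝ := fun i => ∑ j, u j * ω i j with ha
  set b : Fin k → ℝ := fun i => ∑ j, v j * ω i j with hb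
  by_cases hc : ∃ i j : Fin k, b i - a i ≠ b j - a j
  · -- strict monotonicity contradiction
    have hab : ∀ i, a i - b i = ∑ m, (u - v) m * ω i m := by
      intro i
      simp only [ha, hb, Pi.sub_apply, sub_mul, Finset.sum_sub_distrib]
    have hA : ∑ m, (u - v) m * momentMap ω u m
        = ∑ i, (Real.exp (a i) / ∑ i', Real.exp (a i')) * (a i - b i) := by
      rw [dot_momentMap]
      exact Finset.sum_congr rfl fun i _ => by rw [hab i]
    have hB : ∑ m, (u - v) m * momentMap ω v m
        = ∑ i, (Real.exp (b i) / ∑ i', Real.exp (b i')) * (a i - b i) := by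
      rw [dot_momentMap]
      exact Finset.sum_congr rfl fun i _ => by rw [hab i]
    have hAB : ∑ i, (Real.exp (a i) / ∑ i', Real.exp (a i')) * (a i - b i)
        = ∑ i, (Real.exp (b i) / ∑ i', Real.exp (b i')) * (a i - b i) := by
      rw [← hA, ← hB, huv]
    have g1 := gibbs_aux a b hc
    have g2 := gibbs_aux b a (by obtain ⟨i, j, h⟩ := hc; exact ⟨i, j, fun h' => h (by linarith)⟩)
    have e1 : ∑ i, (Real.exp (a i) / ∑ i', Real.exp (a i')) * (b i - a i)
        = - ∑ i, (Real.exp (a i) / ∑ i', Real.exp (a i')) * (a i - b i) := by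
      rw [← Finset.sum_neg_distrib]
      exact Finset.sum_congr rfl fun i _ => by ring
    rw [e1] at g1
    linarith [g1, g2, hAB.le, hAB.ge]
  · -- a - b is constant, use affine span
    push_neg at hc
    apply hne
    have hw : (u - v) = 0 := by
      set f : (Fin n → ℝ) →ₗ[ℝ] ℝ :=
        { toFun := fun x => ∑ m, (u - v) m * x m
          map_add' := fun x y => by
            simp [mul_add, Finset.sum_add_distrib]
          map_smul' := fun c x => by
            simp [Finset.mul_sum]
            exact Finset.sum_congr rfl fun m _ => by ring }
      have hfconst : ∀ i j : Fin k, f (ω i) = f (ω j) := by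
        intro i j
        have h1 : f (ω i) = a i - b i := by
          simp only [f, LinearMap.coe_mk, AddHom.coe_mk]
          simp [ha, hb, Pi.sub_apply, sub_mul, Finset.sum_sub_distrib]
        have h2 : f (ω j) = a j - b j := by
          simp only [f, LinearMap.coe_mk, AddHom.coe_mk]
          simp [ha, hb, Pi.sub_apply, sub_mul, Finset.sum_sub_distrib]
        rw [h1, h2]
        have := hc i j
        linarith
      have hvs : vectorSpan ℝ (Set.range ω) = ⊤ :=
        AffineSubspace.vectorSpan_eq_top_of_affineSpan_eq_top ℝ _ _ hspan
      have hf0 : f = 0 := by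
        apply LinearMap.ext_on (s := Set.range ω -ᵥ Set.range ω) hvs
        rintro x ⟨y, ⟨i, rfl⟩, z, ⟨j, rfl⟩, rfl⟩
        simp only [vsub_eq_sub, map_sub, LinearMap.zero_apply]
        rw [hfconst i j]
        ring
      have : f (u - v) = 0 := by rw [hf0]; rfl
      have hsq : ∑ m, (u - v) m * (u - v) m = 0 := this
      funext m
      have := Finset.sum_eq_zero_iff_of_nonneg
        (fun m (_ : m ∈ Finset.univ) => mul_self_nonneg ((u - v) m)) |>.1 hsq m (Finset.mem_univ m)
      have : (u - v) m = 0 := by nlinarith [this]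
      simpa using this
    have := sub_eq_zero.1 hw
    exact this

lemma momentMap_cont {n k : ℕ} [Nonempty (Fin k)] (ω : Fin k → (Fin n → ℝ)) :
    Continuous (momentMap ω) := by
  have hc : ∀ i : Fin k, Continuous fun u : Fin n → ℝ => Real.exp (∑ j, u j * ω i j) :=
    fun i => Real.continuous_exp.comp
      (continuous_finset_sum _ fun j _ => (continuous_apply j).mul continuous_const)
  have hS : Continuous fun u : Fin n → ℝ => ∑ i, Real.exp (∑ j, u j * ω i j) :=
    continuous_finset_sum _ fun i _ => hc i
  have hSne : ∀ u : Fin n → ℝ, (∑ i, Real.exp (∑ j, u j * ω i j)) ≠ 0 :=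
    fun u => (Finset.sum_pos (fun i _ => Real.exp_pos _) Finset.univ_nonempty).ne'
  exact (hS.inv₀ hSne).smul (continuous_finset_sum _ fun i _ => (hc i).smul continuous_const)

lemma momentMap_eq_sum {n k : ℕ} (ω : Fin k → (Fin n → ℝ)) (u : Fin n → ℝ) :
    momentMap ω u = ∑ i, ((Real.exp (∑ j, u j * ω i j)) / ∑ i', Real.exp (∑ j, u j * ω i' j)) • ω i := by
  rw [momentMap, Finset.smul_sum]
  exact Finset.sum_congr rfl fun i _ => by rw [smul_smul, div_eq_inv_mul]

lemma momentMap_mem_interior {n k : ℕ} (ω : Fin k → (Fin n → ℝ))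
    (hspan : affineSpan ℝ (Set.range ω) = ⊤) (u : Fin n → ℝ) :
    momentMap ω u ∈ interior (convexHull ℝ (Set.range ω)) := by
  have hkne : (Set.range ω).Nonempty := AffineSubspace.nonempty_of_affineSpan_eq_top ℝ _ _ hspan
  haveI : Nonempty (Fin k) := Set.range_nonempty_iff_nonempty.1 hkne
  set S := ∑ i', Real.exp (∑ j, u j * ω i' j) with hS_def
  have hS : 0 < S := Finset.sum_pos (fun i _ => Real.exp_pos _) Finset.univ_nonempty
  set p : Fin k → ℝ := fun i => Real.exp (∑ j, u j * ω i j) / S with hp_def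
  have hp_pos : ∀ i, 0 < p i := fun i => div_pos (Real.exp_pos _) hS
  have hp_sum : ∑ i, p i = 1 := by rw [hp_def, ← Finset.sum_div, ← hS_def, div_self hS.ne']
  have hmom : momentMap ω u = ∑ i, p i • ω i := momentMap_eq_sum ω u
  -- interior point z
  obtain ⟨z, hz⟩ : (interior (convexHull ℝ (Set.range ω))).Nonempty :=
    interior_convexHull_nonempty_iff_affineSpan_eq_top.2 hspan
  have hzhull : z ∈ convexHull ℝ (Set.range ω) := interior_subset hz
  rw [convexHull_range_eq_exists_affineCombination] at hzhull
  obtain ⟨s, w, hw0, hw1, hzw⟩ := hzhull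
  set q : Fin k → ℝ := fun i => if i ∈ s then w i else 0 with hq_def
  have hq0 : ∀ i, 0 ≤ q i := by
    intro i; by_cases h : i ∈ s <;> simp [hq_def, h, hw0 i]
  have hq_sum : ∑ i, q i = 1 := by
    rw [hq_def, Finset.sum_ite_mem, Finset.univ_inter, hw1]
  have hq1 : ∀ i, q i ≤ 1 := by
    intro i
    rw [← hq_sum]
    exact Finset.single_le_sum (fun i _ => hq0 i) (Finset.mem_univ i)
  have hz_sum : z = ∑ i, q i • ω i := by
    rw [← hzw, s.affineCombination_eq_linear_combination ω w hw1, hq_def]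
    calc ∑ i ∈ s, w i • ω i
        = ∑ i ∈ s, (if i ∈ s then w i else 0) • ω i :=
          Finset.sum_congr rfl fun i hi => by simp [hi]
      _ = ∑ i, (if i ∈ s then w i else 0) • ω i :=
          Finset.sum_subset (Finset.subset_univ s) (fun i _ hi => by simp [hi])
  set δ : ℝ := Finset.univ.inf' Finset.univ_nonempty p with hδ_def
  have hδ_pos : 0 < δ := (Finset.lt_inf'_iff _).2 (fun i _ => hp_pos i)
  have hδ_le : ∀ i, δ ≤ p i := fun i => Finset.inf'_le _ (Finset.mem_univ i)
  set c : Fin k → ℝ := fun i => (1 + δ) * p i - δ * q i with hc_def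
  have hc0 : ∀ i, 0 ≤ c i := by
    intro i
    have h1 : δ * q i ≤ δ := by
      calc δ * q i ≤ δ * 1 := by nlinarith [hq1 i, hδ_pos]
        _ = δ := mul_one δ
    have h2 : δ ≤ (1 + δ) * p i := by nlinarith [hp_pos i, hδ_le i, hδ_pos]
    simp only [hc_def]; linarith
  have hc_sum : ∑ i, c i = 1 := by
    simp only [hc_def]
    rw [Finset.sum_sub_distrib, ← Finset.mul_sum, ← Finset.mul_sum, hp_sum, hq_sum]
    ring
  have hwhull : (∑ i, c i • ω i) ∈ convexHull ℝ (Set.range ω) := by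
    have := Finset.centerMass_mem_convexHull (Finset.univ) (w := c)
      (fun i _ => hc0 i) (by rw [hc_sum]; exact one_pos) (z := ω)
      (fun i _ => Set.mem_range_self i)
    rwa [Finset.centerMass_eq_of_sum_1 _ _ hc_sum] at this
  have hcombo : momentMap ω u = (δ / (1 + δ)) • z + (1 / (1 + δ)) • ∑ i, c i • ω i := by
    rw [hmom, hz_sum, Finset.smul_sum, Finset.smul_sum, ← Finset.sum_add_distrib]
    refine Finset.sum_congr rfl fun i _ => ?_
    rw [smul_smul, smul_smul, ← add_smul]
    congr 1
    simp only [hc_def]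
    field_simp
    ring
  rw [hcombo]
  exact (convex_convexHull ℝ _).combo_interior_self_mem_interior hz hwhull
    (div_pos hδ_pos (by linarith)) (by positivity)
    (by field_simp; ring)

set_option maxHeartbeats 1000000 in
lemma momentMap_surj {n k : ℕ} (ω : Fin k → (Fin n → ℝ))
    (hspan : affineSpan ℝ (Set.range ω) = ⊤) {x : Fin n → ℝ}
    (hx : x ∈ interior (convexHull ℝ (Set.range ω))) :
    ∃ u, momentMap ω u = x := by
  have hkne : (Set.range ω).Nonempty := AffineSubspace.nonempty_of_affineSpan_eq_top ℝ _ _ hspan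
  haveI : Nonempty (Fin k) := Set.range_nonempty_iff_nonempty.1 hkne
  set F : (Fin n → ℝ) → ℝ :=
    fun u => Real.log (∑ i, Real.exp (∑ j, u j * ω i j)) - ∑ j, u j * x j with hF_def
  have hSpos : ∀ u : Fin n → ℝ, (0:ℝ) < ∑ i, Real.exp (∑ j, u j * ω i j) :=
    fun u => Finset.sum_pos (fun i _ => Real.exp_pos _) Finset.univ_nonempty
  have hFc : Continuous F := by
    apply Continuous.sub
    · apply Continuous.log
      · exact continuous_finset_sum _ fun i _ => Real.continuous_exp.comp
          (continuous_finset_sum _ fun j _ => (continuous_apply j).mul continuous_const)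
      · exact fun u => (hSpos u).ne'
    · exact continuous_finset_sum _ fun j _ => (continuous_apply j).mul continuous_const
  -- a ball around x inside the hull
  obtain ⟨ε, hε, hball⟩ := Metric.mem_nhds_iff.1 (isOpen_interior.mem_nhds hx)
  have hball' : Metric.ball x ε ⊆ convexHull ℝ (Set.range ω) :=
    hball.trans interior_subset
  -- coercivity
  have hcoer : ∀ u : Fin n → ℝ, ε / 2 * ‖u‖ ≤ F u := by
    intro u
    by_cases hu : u = 0
    · subst hu
      have h1 : F 0 = Real.log (k : ℝ) := by
        simp [hF_def]
      rw [h1]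
      simp only [norm_zero, mul_zero]
      exact Real.log_nonneg (by exact_mod_cast Fin.pos_iff_nonempty.2 ‹_›)
    · have hunorm : (0:ℝ) < ‖u‖ := norm_pos_iff.2 hu
      haveI : Nonempty (Fin n) := by
        by_contra h
        exact hu (funext fun j => absurd ⟨j⟩ h)
      set y : Fin n → ℝ := x + (ε / (2 * ‖u‖)) • u with hy_def
      have hy_hull : y ∈ convexHull ℝ (Set.range ω) := by
        apply hball'
        rw [Metric.mem_ball, hy_def, dist_eq_norm]
        have : x + (ε / (2 * ‖u‖)) • u - x = (ε / (2 * ‖u‖)) • u := by abel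
        rw [this, norm_smul, Real.norm_eq_abs, abs_of_pos (by positivity)]
        rw [div_mul_eq_mul_div, mul_comm (2:ℝ) ‖u‖, ← div_div, mul_div_assoc,
          div_self hunorm.ne']
        linarith
      set M : ℝ := Finset.univ.sup' Finset.univ_nonempty (fun i => ∑ j, u j * ω i j) with hM_def
      have hlin : IsLinearMap ℝ (fun z : Fin n → ℝ => ∑ j, u j * z j) := by
        constructor
        · intro z w; simp [mul_add, Finset.sum_add_distrib]
        · intro c z
          simp only [Pi.smul_apply, smul_eq_mul, Finset.mul_sum]
          exact Finset.sum_congr rfl fun j _ => by ring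
      have hhalf : convexHull ℝ (Set.range ω) ⊆ {z : Fin n → ℝ | ∑ j, u j * z j ≤ M} := by
        apply convexHull_min
        · rintro _ ⟨i, rfl⟩
          show ∑ j, u j * ω i j ≤ M
          rw [hM_def]
          exact Finset.le_sup' (fun i : Fin k => ∑ j, u j * ω i j) (Finset.mem_univ i)
        · exact convex_halfSpace_le hlin M
      have hy_le : ∑ j, u j * y j ≤ M := hhalf hy_hull
      have hy_eq : ∑ j, u j * y j = (∑ j, u j * x j) + (ε / (2 * ‖u‖)) * ∑ j, u j * u j := by
        simp only [hy_def, Pi.add_apply, Pi.smul_apply, smul_eq_mul, mul_add,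
          Finset.sum_add_distrib, Finset.mul_sum]
        congr 1
        exact Finset.sum_congr rfl fun j _ => by ring
      have huu : ‖u‖ ^ 2 ≤ ∑ j, u j * u j := by
        have hsq : ∀ j, u j * u j = u j ^ 2 := fun j => (sq (u j)).symm
        have hnn : (0:ℝ) ≤ ∑ j, u j ^ 2 :=
          Finset.sum_nonneg fun j _ => sq_nonneg _
        have hb : ‖u‖ ≤ Real.sqrt (∑ j, u j ^ 2) := by
          apply pi_norm_le_iff_of_nonneg (Real.sqrt_nonneg _) |>.2
          intro j
          rw [Real.norm_eq_abs]
          apply Real.abs_le_sqrt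
          exact Finset.single_le_sum (f := fun j => u j ^ 2) (fun j _ => sq_nonneg _) (Finset.mem_univ j)
        calc ‖u‖ ^ 2 ≤ Real.sqrt (∑ j, u j ^ 2) ^ 2 := by
              apply pow_le_pow_left₀ (norm_nonneg _) hb
          _ = ∑ j, u j ^ 2 := Real.sq_sqrt hnn
          _ = ∑ j, u j * u j := Finset.sum_congr rfl fun j _ => (hsq j).symm
      have hMF : M ≤ Real.log (∑ i, Real.exp (∑ j, u j * ω i j)) := by
        obtain ⟨i₀, _, hi₀⟩ := Finset.exists_mem_eq_sup' (Finset.univ_nonempty)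
          (fun i : Fin k => ∑ j, u j * ω i j)
        rw [Real.le_log_iff_exp_le (hSpos u), hM_def, hi₀]
        exact Finset.single_le_sum (f := fun i => Real.exp (∑ j, u j * ω i j))
          (fun i _ => (Real.exp_pos _).le) (Finset.mem_univ i₀)
      have key : (∑ j, u j * x j) + ε / 2 * ‖u‖ ≤ M := by
        have h2 : (ε / (2 * ‖u‖)) * ∑ j, u j * u j ≥ ε / 2 * ‖u‖ := by
          have : (ε / (2 * ‖u‖)) * ‖u‖ ^ 2 = ε / 2 * ‖u‖ := by
            field_simp
          nlinarith [huu, div_pos hε (by positivity : (0:ℝ) < 2 * ‖u‖)]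
        linarith [hy_le, hy_eq.ge, hy_eq.le]
      simp only [hF_def]
      linarith [hMF]
  -- existence of a global minimizer
  have hF0 : 0 ≤ F 0 := by simpa using hcoer 0
  set R : ℝ := 2 / ε * F 0 + 1 with hR_def
  have hR : 0 < R := by positivity
  have hRF : F 0 < ε / 2 * R := by
    have : ε / 2 * R = F 0 + ε / 2 := by
      rw [hR_def]; field_simp
    rw [this]; linarith
  obtain ⟨u₀, hu₀K, hmin⟩ := (isCompact_closedBall (0 : Fin n → ℝ) R).exists_isMinOn
    ⟨0, Metric.mem_closedBall_self hR.le⟩ hFc.continuousOn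
  have hglob : ∀ u, F u₀ ≤ F u := by
    intro u
    by_cases h : u ∈ Metric.closedBall (0 : Fin n → ℝ) R
    · exact hmin h
    · have hRu : R < ‖u‖ := by
        simpa [Metric.mem_closedBall, dist_zero_right, not_le] using h
      have h1 := hcoer u
      have h0 : F u₀ ≤ F 0 := hmin (Metric.mem_closedBall_self hR.le)
      have h2 : ε / 2 * R < ε / 2 * ‖u‖ := mul_lt_mul_of_pos_left hRu (half_pos hε)
      exact (h0.trans_lt (hRF.trans (h2.trans_le h1))).le
  -- first-order condition at the minimizer
  have key : ∀ m : Fin n,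
      (∑ i, Real.exp (∑ j, u₀ j * ω i j) * ω i m)
        / (∑ i, Real.exp (∑ j, u₀ j * ω i j)) - x m = 0 := by
    intro m
    set a : Fin k → ℝ := fun i => ∑ j, u₀ j * ω i j with ha_def
    set g : ℝ → ℝ := fun t =>
      Real.log (∑ i, Real.exp (a i + t * ω i m)) - ((∑ j, u₀ j * x j) + t * x m) with hg_def
    have hsingle : ∀ (t : ℝ) (c : Fin n → ℝ),
        ∑ j, (u₀ + t • (Pi.single m 1 : Fin n → ℝ)) j * c j = (∑ j, u₀ j * c j) + t * c m := by
      intro t c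
      simp only [Pi.add_apply, Pi.smul_apply, smul_eq_mul, add_mul, Finset.sum_add_distrib]
      congr 1
      have : ∀ j, t * (Pi.single m 1 : Fin n → ℝ) j * c j = if j = m then t * c m else 0 := by
        intro j
        by_cases h : j = m <;> simp [Pi.single_apply, h]
      rw [Finset.sum_congr rfl fun j _ => this j, Finset.sum_ite_eq' Finset.univ m
        (fun _ => t * c m)]
      simp
    have hgF : ∀ t, g t = F (u₀ + t • (Pi.single m 1 : Fin n → ℝ)) := by
      intro t
      simp only [hg_def, hF_def]
      congr 1
      · congr 1
        refine Finset.sum_congr rfl fun i _ => ?_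
        rw [hsingle t (ω i)]
      · rw [hsingle t x]
    have hlocmin : IsLocalMin g 0 := by
      apply Filter.Eventually.of_forall
      intro t
      rw [hgF 0, hgF t]
      simp only [zero_smul, add_zero]
      exact hglob _
    have hS0 : (0:ℝ) < ∑ i, Real.exp (a i + 0 * ω i m) :=
      Finset.sum_pos (fun i _ => Real.exp_pos _) Finset.univ_nonempty
    have hd : HasDerivAt g
        ((∑ i, Real.exp (a i + 0 * ω i m) * ω i m) / (∑ i, Real.exp (a i + 0 * ω i m)) - x m)
        0 := by
      have hexp : ∀ i : Fin k, HasDerivAt (fun t : ℝ => Real.exp (a i + t * ω i m))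
          (Real.exp (a i + 0 * ω i m) * ω i m) 0 :=
        fun i => ((hasDerivAt_mul_const (ω i m)).const_add (a i)).exp
      have hsum : HasDerivAt (fun t : ℝ => ∑ i, Real.exp (a i + t * ω i m))
          (∑ i, Real.exp (a i + 0 * ω i m) * ω i m) 0 :=
        HasDerivAt.fun_sum (fun i _ => hexp i)
      have hlog := hsum.log hS0.ne'
      have hlin2 : HasDerivAt (fun t : ℝ => (∑ j, u₀ j * x j) + t * x m) (x m) 0 :=
        (hasDerivAt_mul_const (x m)).const_add _
      exact hlog.sub hlin2
    have hzero := hlocmin.hasDerivAt_eq_zero hd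
    simpa [zero_mul, add_zero, ha_def] using hzero
  refine ⟨u₀, funext fun m => ?_⟩
  have hkey := key m
  have hS := hSpos u₀
  have h1 : momentMap ω u₀ m
      = (∑ i, Real.exp (∑ j, u₀ j * ω i j))⁻¹ * ∑ i, Real.exp (∑ j, u₀ j * ω i j) * ω i m := by
    simp [momentMap, Finset.sum_apply]
  rw [h1, inv_mul_eq_div]
  linarith [hkey]

/-- The moment map on the open torus stratum (Section 3.1): if the points
`ω₁,…,ω_k` affinely span `ℝⁿ`, then `μ` is continuous, injective, and its range is
exactly the interior of `conv{ω₁,…,ω_k}`. -/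
theorem momentMap_continuous_injective_range {n k : ℕ}
    (ω : Fin k → (Fin n → ℝ))
    (hspan : affineSpan ℝ (Set.range ω) = ⊤) :
    Continuous (momentMap ω) ∧ Function.Injective (momentMap ω) ∧
      Set.range (momentMap ω) = interior (convexHull ℝ (Set.range ω)) := by
  have hkne : (Set.range ω).Nonempty := AffineSubspace.nonempty_of_affineSpan_eq_top ℝ _ _ hspan
  haveI : Nonempty (Fin k) := Set.range_nonempty_iff_nonempty.1 hkne
  refine ⟨momentMap_cont ω, momentMap_inj ω hspan, Set.eq_of_subset_of_subset ?_ ?_⟩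
  · rintro _ ⟨u, rfl⟩
    exact momentMap_mem_interior ω hspan u
  · intro x hx
    exact momentMap_surj ω hspan hx
end
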